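/- arXiv:1408.1384 — 2 statements merged into one kernel-verified Lean document; each statement's English description precedes it below -/
import Mathlib

section
/- Every finite-dimensional irreducible representation V of U_q(sl_2) of dimension d, in which all eigenvalues of K are integer powers of q, is isomorphic to M_d. -/
open scoped BigOperators TensorProduct

noncomputable def qint (q : ℂ) (m : ℤ) : ℂ := (q ^ m - q ^ (-m)) / (q - q⁻¹)

noncomputable def qfact (q : ℂ) (n : ℕ) : ℂ := ∏ m ∈ Finset.range n, qint q (m + 1)

noncomputable def qbinom (q : ℂ) (n k : ℕ) : ℂ := qfact q n / (qfact q k * qfact q (n - k))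

/-- The generator `K` acting on the `d`-dimensional irreducible representation `M_d`. -/
noncomputable def Kop (q : ℂ) (d : ℕ) : (Fin d → ℂ) →ₗ[ℂ] (Fin d → ℂ) where
  toFun v := fun j => q ^ ((d : ℤ) - 1 - 2 * (j : ℤ)) * v j
  map_add' u v := by funext j; simp [mul_add]
  map_smul' c v := by funext j; simp [smul_eq_mul]; ring

/-- The generator `K⁻¹` acting on `M_d`. -/
noncomputable def Kinvop (q : ℂ) (d : ℕ) : (Fin d → ℂ) →ₗ[ℂ] (Fin d → ℂ) where
  toFun v := fun j => q ^ (-((d : ℤ) - 1 - 2 * (j : ℤ))) * v j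
  map_add' u v := by funext j; simp [mul_add]
  map_smul' c v := by funext j; simp [smul_eq_mul]; ring

/-- The generator `F` acting on `M_d`: `F.e_j = e_{j+1}`, `F.e_{d-1} = 0`. -/
noncomputable def Fop (d : ℕ) : (Fin d → ℂ) →ₗ[ℂ] (Fin d → ℂ) where
  toFun v := fun j =>
    if h : 0 < (j : ℕ) then v ⟨(j : ℕ) - 1, lt_of_le_of_lt (Nat.sub_le _ _) j.isLt⟩ else 0
  map_add' u v := by funext j; dsimp only [Pi.add_apply, Pi.smul_apply, RingHom.id_apply]; split_ifs with h <;> simp [h]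
  map_smul' c v := by funext j; dsimp only [Pi.add_apply, Pi.smul_apply, RingHom.id_apply]; split_ifs with h <;> simp [h]

/-- The generator `E` acting on `M_d`: `E.e_j = [j][d-j] e_{j-1}`, `E.e_0 = 0`. -/
noncomputable def Eop (q : ℂ) (d : ℕ) : (Fin d → ℂ) →ₗ[ℂ] (Fin d → ℂ) where
  toFun v := fun j =>
    if h : (j : ℕ) + 1 < d then
      qint q ((j : ℤ) + 1) * qint q ((d : ℤ) - ((j : ℤ) + 1)) * v ⟨(j : ℕ) + 1, h⟩
    else 0
  map_add' u v := by funext j; dsimp only [Pi.add_apply, Pi.smul_apply, RingHom.id_apply]; split_ifs with h <;> simp [h, mul_add]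
  map_smul' c v := by
    funext j; dsimp only [Pi.add_apply, Pi.smul_apply, RingHom.id_apply]; split_ifs with h <;> simp [h, smul_eq_mul] <;> ring

/-- Basis vector `e_l` of `M_d`. -/
noncomputable def bas (d : ℕ) (l : Fin d) : Fin d → ℂ := Pi.single l 1

/-!
Since `q` is not a root of unity, the weights `q ^ m` are pairwise distinct, and `E`, `F` shift
them by `q ^ (± 2)`; in finite dimension a chain of weight vectors with distinct weights must end
in `0`. Pushing a `K`-eigenvector (of weight `q ^ m`, by assumption) up with `E` therefore yields
a highest-weight vector `w` of some weight `q ^ n`. The vectors `F ^ j w` (`j < N`, with `N` the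
first index where `F ^ N w = 0`) have distinct weights, so they are independent, and
`E F ^ j w = [j] [n + 1 - j] F ^ (j - 1) w` shows that their span is invariant, hence all of `V`
by irreducibility. Thus `N = d`, and applying `E` to `F ^ d w = 0` forces `[n + 1 - d] = 0`, that
is `n = d - 1`. In the basis `F ^ j w` the generators then act exactly as on `M_d`.
-/

section QNumbers

variable {q : ℂ}

theorem zpow_injective_of_not_root (hq : q ≠ 0) (hroot : ∀ m : ℤ, m ≠ 0 → q ^ m ≠ 1) :
    Function.Injective (fun m : ℤ => q ^ m) := by
  intro a b hab
  by_contra hne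
  exact hroot (a - b) (sub_ne_zero.mpr hne)
    (by simp only [zpow_sub₀ hq, hab, div_self (zpow_ne_zero b hq)])

theorem sub_inv_ne_zero_of_not_root (hq : q ≠ 0) (hroot : ∀ m : ℤ, m ≠ 0 → q ^ m ≠ 1) :
    q - q⁻¹ ≠ 0 := by
  intro h
  have := zpow_injective_of_not_root hq hroot (a₁ := 1) (a₂ := -1)
    (by simpa [sub_eq_zero] using h)
  omega

@[simp]
theorem qint_zero (q : ℂ) : qint q 0 = 0 := by simp [qint]

theorem qint_ne_zero (hq : q ≠ 0) (hroot : ∀ m : ℤ, m ≠ 0 → q ^ m ≠ 1) {m : ℤ}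
    (hm : m ≠ 0) : qint q m ≠ 0 := by
  rw [qint, div_ne_zero_iff, sub_ne_zero]
  refine ⟨fun h => hm ?_, sub_inv_ne_zero_of_not_root hq hroot⟩
  have := zpow_injective_of_not_root hq hroot h
  omega

theorem qint_mul_qint (hq : q ≠ 0) (j m : ℤ) :
    qint q (j + 1) * qint q (m - j) = qint q j * qint q (m + 1 - j) + qint q (m - 2 * j) := by
  rcases eq_or_ne (q - q⁻¹) 0 with h | h
  · simp [qint, h]
  simp only [qint]
  field_simp
  simp only [zpow_add₀ hq, zpow_sub₀ hq, zpow_neg, two_mul, zpow_one]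
  field_simp
  ring

end QNumbers

section Model

variable (q : ℂ) (d : ℕ)

theorem Kop_single (i : Fin d) :
    Kop q d (Pi.single i 1) = q ^ ((d : ℤ) - 1 - 2 * (i : ℤ)) • Pi.single i 1 := by
  ext l
  by_cases h : l = i
  · subst h; simp [Kop]
  · simp [Kop, h]

theorem Kinvop_single (i : Fin d) :
    Kinvop q d (Pi.single i 1) = q ^ (-((d : ℤ) - 1 - 2 * (i : ℤ))) • Pi.single i 1 := by
  ext l
  by_cases h : l = i
  · subst h; simp [Kinvop]
  · simp [Kinvop, h]

theorem Fop_single (i : Fin d) :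
    Fop d (Pi.single i 1) = if h : (i : ℕ) + 1 < d then Pi.single ⟨i + 1, h⟩ 1 else 0 := by
  split_ifs <;> ext l <;>
    simp only [Fop, LinearMap.coe_mk, AddHom.coe_mk, Pi.single_apply, Fin.ext_iff,
      Pi.zero_apply] <;>
    split_ifs <;> first | rfl | omega

theorem Eop_single (i : Fin d) :
    Eop q d (Pi.single i 1) =
      (qint q i * qint q (d - i)) • Pi.single ⟨i - 1, by omega⟩ 1 := by
  ext l
  simp only [Eop, LinearMap.coe_mk, AddHom.coe_mk, Pi.single_apply, Fin.ext_iff,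
    Pi.smul_apply, smul_eq_mul]
  rcases Nat.eq_zero_or_pos i with hi | hi
  · simp [hi]
  · have hli : (l : ℕ) + 1 = i ↔ (l : ℕ) = i - 1 := by omega
    split_ifs <;> simp_all

end Model

open Module Module.End

theorem Module.End.exists_eq_zero_of_injective_eigenvalues {𝕜 M : Type*} [Field 𝕜]
    [AddCommGroup M] [Module 𝕜 M] [FiniteDimensional 𝕜 M] (f : Module.End 𝕜 M)
    {μ : ℕ → 𝕜} (hμ : Function.Injective μ) {u : ℕ → M}
    (hu : ∀ k, f (u k) = μ k • u k) :
    ∃ k, u k = 0 := by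
  by_contra! hne
  have li : LinearIndependent 𝕜 fun i : Fin (finrank 𝕜 M + 1) => u i :=
    f.eigenvectors_linearIndependent' (μ ∘ Fin.val) (hμ.comp Fin.val_injective) _
      fun i => hasEigenvector_iff.mpr ⟨mem_eigenspace_iff.mpr (hu i), hne i⟩
  simpa using li.fintype_card_le_finrank

theorem Nat.exists_eq_zero_forall_lt_ne_zero {M : Type*} [Zero M] {u : ℕ → M} (h0 : u 0 ≠ 0)
    (h : ∃ k, u k = 0) : ∃ N, 0 < N ∧ u N = 0 ∧ ∀ j < N, u j ≠ 0 := by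
  classical
  refine ⟨Nat.find h, Nat.pos_of_ne_zero fun h' => h0 ?_, Nat.find_spec h,
    fun j hj => Nat.find_min h hj⟩
  simpa [h'] using Nat.find_spec h

namespace UqSl2

variable {V : Type*} [AddCommGroup V] [Module ℂ V] {q : ℂ} {E F K Kinv : Module.End ℂ V}

theorem K_apply_E (hq : q ≠ 0) (hKE : K * E = q ^ 2 • (E * K)) {v : V} {m : ℤ}
    (hv : K v = q ^ m • v) : K (E v) = q ^ (m + 2) • E v := by
  rw [← mul_apply, hKE, LinearMap.smul_apply, mul_apply, hv, map_smul, smul_smul, zpow_add₀ hq,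
    mul_comm]
  norm_cast

theorem K_apply_F (hq : q ≠ 0) (hKF : K * F = (q ^ 2)⁻¹ • (F * K)) {v : V} {m : ℤ}
    (hv : K v = q ^ m • v) : K (F v) = q ^ (m - 2) • F v := by
  rw [← mul_apply, hKF, LinearMap.smul_apply, mul_apply, hv, map_smul, smul_smul, zpow_sub₀ hq,
    div_eq_inv_mul]
  norm_cast

theorem Kinv_apply (hq : q ≠ 0) (hKinvK : Kinv * K = 1) {v : V} {m : ℤ}
    (hv : K v = q ^ m • v) : Kinv v = q ^ (-m) • v := by
  have h := congr($hKinvK v)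
  rw [mul_apply, hv, map_smul, one_apply] at h
  conv_rhs => rw [← h]
  rw [smul_smul, ← zpow_add₀ hq, neg_add_cancel, zpow_zero, one_smul]

theorem E_apply_F (hEF : E * F - F * E = (q - q⁻¹)⁻¹ • (K - Kinv)) {v : V} {m : ℤ}
    (hKv : K v = q ^ m • v) (hKinvv : Kinv v = q ^ (-m) • v) :
    E (F v) = F (E v) + qint q m • v := by
  have h := congr($hEF v)
  simp only [LinearMap.sub_apply, mul_apply, LinearMap.smul_apply, hKv, hKinvv] at h
  rw [eq_add_of_sub_eq' h, qint, div_eq_inv_mul, mul_sub, sub_smul, smul_sub, smul_smul,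
    smul_smul]

theorem K_apply_E_pow (hq : q ≠ 0) (hKE : K * E = q ^ 2 • (E * K)) {v : V} {m : ℤ}
    (hv : K v = q ^ m • v) (k : ℕ) : K ((E ^ k) v) = q ^ (m + 2 * k) • (E ^ k) v := by
  induction k with
  | zero => simpa using hv
  | succ k ih =>
    rw [pow_succ', mul_apply, K_apply_E hq hKE ih]
    push_cast
    ring_nf

theorem K_apply_F_pow (hq : q ≠ 0) (hKF : K * F = (q ^ 2)⁻¹ • (F * K)) {v : V} {m : ℤ}
    (hv : K v = q ^ m • v) (j : ℕ) : K ((F ^ j) v) = q ^ (m - 2 * j) • (F ^ j) v := by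
  induction j with
  | zero => simpa using hv
  | succ j ih =>
    rw [pow_succ', mul_apply, K_apply_F hq hKF ih]
    push_cast
    ring_nf

/-- For `j = 0` the truncated `j - 1` is harmless, as the coefficient `qint q 0` vanishes. -/
theorem E_apply_F_pow (hq : q ≠ 0) (hKF : K * F = (q ^ 2)⁻¹ • (F * K))
    (hEF : E * F - F * E = (q - q⁻¹)⁻¹ • (K - Kinv)) (hKinvK : Kinv * K = 1)
    {w : V} {n : ℤ} (hKw : K w = q ^ n • w) (hEw : E w = 0) (j : ℕ) :
    E ((F ^ j) w) = (qint q j * qint q (n + 1 - j)) • (F ^ (j - 1)) w := by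
  induction j with
  | zero => simp [hEw]
  | succ j ih =>
    have hK := K_apply_F_pow hq hKF hKw j
    have hF : (qint q j * qint q (n + 1 - j)) • F ((F ^ (j - 1)) w) =
        (qint q j * qint q (n + 1 - j)) • (F ^ j) w := by
      rcases j with _ | j
      · simp
      · rw [← mul_apply, ← pow_succ']; rfl
    rw [pow_succ', mul_apply, E_apply_F hEF hK (Kinv_apply hq hKinvK hK), ih, map_smul, hF,
      Nat.add_sub_cancel, ← add_smul, ← qint_mul_qint hq j n]
    push_cast
    ring_nf

theorem exists_highest_weight_vector [FiniteDimensional ℂ V] (hq : q ≠ 0)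
    (hroot : ∀ m : ℤ, m ≠ 0 → q ^ m ≠ 1) (hKE : K * E = q ^ 2 • (E * K)) {v : V}
    (hv0 : v ≠ 0) {m : ℤ} (hv : K v = q ^ m • v) :
    ∃ w : V, ∃ n : ℤ, w ≠ 0 ∧ K w = q ^ n • w ∧ E w = 0 := by
  have hinj : Function.Injective fun k : ℕ => q ^ (m + 2 * k) := fun a b h => by
    have := zpow_injective_of_not_root hq hroot h
    omega
  obtain ⟨N, hN0, hN, hne⟩ := Nat.exists_eq_zero_forall_lt_ne_zero (u := fun k => (E ^ k) v)
    (by simpa using hv0)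
    (K.exists_eq_zero_of_injective_eigenvalues hinj (K_apply_E_pow hq hKE hv))
  refine ⟨(E ^ (N - 1)) v, _, hne _ (by omega), K_apply_E_pow hq hKE hv _, ?_⟩
  rwa [← mul_apply, ← pow_succ', Nat.sub_add_cancel hN0]

theorem span_F_pow_eq_top (hq : q ≠ 0) (hKF : K * F = (q ^ 2)⁻¹ • (F * K))
    (hEF : E * F - F * E = (q - q⁻¹)⁻¹ • (K - Kinv)) (hKinvK : Kinv * K = 1)
    (hirr : ∀ p : Submodule ℂ V, (∀ v ∈ p, E v ∈ p) → (∀ v ∈ p, F v ∈ p) →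
      (∀ v ∈ p, K v ∈ p) → (∀ v ∈ p, Kinv v ∈ p) → p = ⊥ ∨ p = ⊤)
    {w : V} {n : ℤ} (hw0 : w ≠ 0) (hKw : K w = q ^ n • w) (hEw : E w = 0) {N : ℕ}
    (hN : (F ^ N) w = 0) :
    Submodule.span ℂ (Set.range fun i : Fin N => (F ^ (i : ℕ)) w) = ⊤ := by
  set p := Submodule.span ℂ (Set.range fun i : Fin N => (F ^ (i : ℕ)) w)
  have mem (j : ℕ) : (F ^ j) w ∈ p := by
    by_cases hj : j < N
    · exact Submodule.subset_span ⟨⟨j, hj⟩, rfl⟩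
    · rw [← Nat.sub_add_cancel (not_lt.mp hj), pow_add, mul_apply, hN, map_zero]
      exact p.zero_mem
  have invariant (T : Module.End ℂ V) (hT : ∀ j, T ((F ^ j) w) ∈ p) :
      ∀ v ∈ p, T v ∈ p :=
    fun v hv => (Submodule.span_le (p := p.comap T)).mpr (by rintro _ ⟨i, rfl⟩; exact hT i) hv
  refine (hirr p ?_ ?_ ?_ ?_).resolve_left fun hbot => hw0 ?_
  · refine invariant E fun j => ?_
    rw [E_apply_F_pow hq hKF hEF hKinvK hKw hEw]
    exact p.smul_mem _ (mem _)
  · refine invariant F fun j => ?_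
    rw [← mul_apply, ← pow_succ']
    exact mem _
  · refine invariant K fun j => ?_
    rw [K_apply_F_pow hq hKF hKw]
    exact p.smul_mem _ (mem _)
  · refine invariant Kinv fun j => ?_
    rw [Kinv_apply hq hKinvK (K_apply_F_pow hq hKF hKw j)]
    exact p.smul_mem _ (mem _)
  · simpa [hbot] using mem 0

theorem linearIndependent_F_pow (hq : q ≠ 0) (hroot : ∀ m : ℤ, m ≠ 0 → q ^ m ≠ 1)
    (hKF : K * F = (q ^ 2)⁻¹ • (F * K)) {w : V} {n : ℤ} (hKw : K w = q ^ n • w) {N : ℕ}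
    (hne : ∀ j < N, (F ^ j) w ≠ 0) :
    LinearIndependent ℂ fun i : Fin N => (F ^ (i : ℕ)) w := by
  have hinj : Function.Injective fun i : Fin N => q ^ (n - 2 * (i : ℕ)) := fun a b h => by
    have := zpow_injective_of_not_root hq hroot h
    omega
  exact K.eigenvectors_linearIndependent' _ hinj _ fun i => hasEigenvector_iff.mpr
    ⟨mem_eigenspace_iff.mpr (K_apply_F_pow hq hKF hKw i), hne i i.isLt⟩

theorem highest_weight_eq_sub_one (hq : q ≠ 0) (hroot : ∀ m : ℤ, m ≠ 0 → q ^ m ≠ 1)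
    (hKF : K * F = (q ^ 2)⁻¹ • (F * K))
    (hEF : E * F - F * E = (q - q⁻¹)⁻¹ • (K - Kinv))
    (hKinvK : Kinv * K = 1) {w : V} {n : ℤ} (hKw : K w = q ^ n • w) (hEw : E w = 0) {N : ℕ}
    (hN0 : 0 < N) (hN : (F ^ N) w = 0) (hne : (F ^ (N - 1)) w ≠ 0) : n = N - 1 := by
  have h := E_apply_F_pow hq hKF hEF hKinvK hKw hEw N
  rw [hN, map_zero, eq_comm, smul_eq_zero, mul_eq_zero] at h
  rcases h with (h | h) | h
  · exact absurd h (qint_ne_zero hq hroot (by omega))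
  · by_contra hn
    exact qint_ne_zero hq hroot (by omega) h
  · exact absurd h hne

theorem exists_basis_F_pow [FiniteDimensional ℂ V] [Nontrivial V] (hq : q ≠ 0)
    (hroot : ∀ m : ℤ, m ≠ 0 → q ^ m ≠ 1) (hKE : K * E = q ^ 2 • (E * K))
    (hKF : K * F = (q ^ 2)⁻¹ • (F * K))
    (hEF : E * F - F * E = (q - q⁻¹)⁻¹ • (K - Kinv))
    (hKinvK : Kinv * K = 1)
    (hirr : ∀ p : Submodule ℂ V, (∀ v ∈ p, E v ∈ p) → (∀ v ∈ p, F v ∈ p) →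
      (∀ v ∈ p, K v ∈ p) → (∀ v ∈ p, Kinv v ∈ p) → p = ⊥ ∨ p = ⊤)
    (heig : ∀ μ : ℂ, HasEigenvalue K μ → ∃ m : ℤ, μ = q ^ m) :
    ∃ (w : V) (b : Basis (Fin (finrank ℂ V)) ℂ V), (∀ i, b i = (F ^ (i : ℕ)) w) ∧
      K w = q ^ ((finrank ℂ V : ℤ) - 1) • w ∧ E w = 0 ∧ (F ^ finrank ℂ V) w = 0 := by
  obtain ⟨μ, hμ⟩ := exists_eigenvalue K
  obtain ⟨m, rfl⟩ := heig μ hμ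
  obtain ⟨v, hv⟩ := hμ.exists_hasEigenvector
  obtain ⟨w, n, hw0, hKw, hEw⟩ :=
    exists_highest_weight_vector hq hroot hKE hv.2 hv.apply_eq_smul
  have hinj : Function.Injective fun j : ℕ => q ^ (n - 2 * j) := fun a b h => by
    have := zpow_injective_of_not_root hq hroot h
    omega
  obtain ⟨N, hN0, hN, hne⟩ := Nat.exists_eq_zero_forall_lt_ne_zero (u := fun j => (F ^ j) w)
    (by simpa using hw0)
    (K.exists_eq_zero_of_injective_eigenvalues hinj (K_apply_F_pow hq hKF hKw))
  let b := Basis.mk (linearIndependent_F_pow hq hroot hKF hKw hne)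
    (span_F_pow_eq_top hq hKF hEF hKinvK hirr hw0 hKw hEw hN).ge
  obtain rfl : N = finrank ℂ V := by simpa using (finrank_eq_card_basis b).symm
  obtain rfl :=
    highest_weight_eq_sub_one hq hroot hKF hEF hKinvK hKw hEw hN0 hN (hne _ (by omega))
  exact ⟨w, b, Basis.mk_apply _ _, hKw, hEw, hN⟩

end UqSl2

theorem Module.Basis.equivFun_apply_eq_of_forall {R M ι : Type*} [CommSemiring R]
    [AddCommMonoid M] [Module R M] [Fintype ι] [DecidableEq ι] (b : Basis ι R M)
    {T : Module.End R M} {T' : Module.End R (ι → R)}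
    (h : ∀ i, b.equivFun (T (b i)) = T' (Pi.single i 1)) (v : M) :
    b.equivFun (T v) = T' (b.equivFun v) :=
  congr($(b.ext (f₁ := b.equivFun.toLinearMap ∘ₗ T) (f₂ := T' ∘ₗ b.equivFun.toLinearMap)
    fun i => by simp [h, Finsupp.single_eq_pi_single]) v)

open UqSl2

theorem irreducible_iso_Md_general (q : ℂ) (hq : q ≠ 0)
    (hroot : ∀ m : ℤ, m ≠ 0 → q ^ m ≠ 1) (d : ℕ) (hd : 0 < d)
    (V : Type) [AddCommGroup V] [Module ℂ V] [FiniteDimensional ℂ V]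
    (hdim : Module.finrank ℂ V = d)
    (EV FV KV KinvV : V →ₗ[ℂ] V)
    (hKinvK : KinvV * KV = 1)
    (hKE : KV * EV = q ^ 2 • (EV * KV))
    (hKF : KV * FV = (q ^ 2)⁻¹ • (FV * KV))
    (hEF : EV * FV - FV * EV = (q - q⁻¹)⁻¹ • (KV - KinvV))
    (hirr : ∀ p : Submodule ℂ V, (∀ v ∈ p, EV v ∈ p) → (∀ v ∈ p, FV v ∈ p) →
      (∀ v ∈ p, KV v ∈ p) → (∀ v ∈ p, KinvV v ∈ p) → p = ⊥ ∨ p = ⊤)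
    (heig : ∀ μ : ℂ, Module.End.HasEigenvalue KV μ → ∃ m : ℤ, μ = q ^ m) :
    ∃ φ : V ≃ₗ[ℂ] (Fin d → ℂ),
      (∀ v, φ (EV v) = Eop q d (φ v)) ∧
      (∀ v, φ (FV v) = Fop d (φ v)) ∧
      (∀ v, φ (KV v) = Kop q d (φ v)) ∧
      (∀ v, φ (KinvV v) = Kinvop q d (φ v)) := by
  have : Nontrivial V := finrank_pos_iff.mp (hdim ▸ hd)
  obtain ⟨w, b, hb, hKw, hEw, hFw⟩ :=
    exists_basis_F_pow hq hroot hKE hKF hEF hKinvK hirr heig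
  subst hdim
  have hφ (j : ℕ) (hj : j < finrank ℂ V) :
      b.equivFun ((FV ^ j) w) = Pi.single ⟨j, hj⟩ 1 := by
    rw [← Finsupp.single_eq_pi_single, ← b.repr_self ⟨j, hj⟩, hb]
    rfl
  refine ⟨b.equivFun, b.equivFun_apply_eq_of_forall fun i => ?_,
    b.equivFun_apply_eq_of_forall fun i => ?_, b.equivFun_apply_eq_of_forall fun i => ?_,
    b.equivFun_apply_eq_of_forall fun i => ?_⟩ <;> rw [hb]
  · rw [E_apply_F_pow hq hKF hEF hKinvK hKw hEw, map_smul, hφ _ (by omega),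
      Eop_single]
    ring_nf
  · rw [← mul_apply, ← pow_succ', Fop_single]
    split_ifs with h
    · exact hφ _ h
    · rw [show (i : ℕ) + 1 = finrank ℂ V by omega, hFw, map_zero]
  · rw [K_apply_F_pow hq hKF hKw, map_smul, hφ _ i.isLt, Kop_single]
  · rw [Kinv_apply hq hKinvK (K_apply_F_pow hq hKF hKw i), map_smul, hφ _ i.isLt,
      Kinvop_single]

/-- Lemma 2.3 (uniqueness): any `d`-dimensional irreducible representation of `U_q(sl₂)`
in which all eigenvalues of `K` are integer powers of `q` is isomorphic to `M_d`.  A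
representation is encoded as a quadruple of operators satisfying the defining relations. -/
theorem irreducible_iso_Md (q : ℂ) (hq : q ≠ 0)
    (hroot : ∀ m : ℤ, m ≠ 0 → q ^ m ≠ 1) (d : ℕ) (hd : 0 < d)
    (V : Type) [AddCommGroup V] [Module ℂ V] [FiniteDimensional ℂ V]
    (hdim : Module.finrank ℂ V = d)
    (EV FV KV KinvV : V →ₗ[ℂ] V)
    (hKKinv : KV * KinvV = 1) (hKinvK : KinvV * KV = 1)
    (hKE : KV * EV = q ^ 2 • (EV * KV))
    (hKF : KV * FV = (q ^ 2)⁻¹ • (FV * KV))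
    (hEF : EV * FV - FV * EV = (q - q⁻¹)⁻¹ • (KV - KinvV))
    (hirr : ∀ p : Submodule ℂ V, (∀ v ∈ p, EV v ∈ p) → (∀ v ∈ p, FV v ∈ p) →
      (∀ v ∈ p, KV v ∈ p) → (∀ v ∈ p, KinvV v ∈ p) → p = ⊥ ∨ p = ⊤)
    (heig : ∀ μ : ℂ, Module.End.HasEigenvalue KV μ → ∃ m : ℤ, μ = q ^ m) :
    ∃ φ : V ≃ₗ[ℂ] (Fin d → ℂ),
      (∀ v, φ (EV v) = Eop q d (φ v)) ∧
      (∀ v, φ (FV v) = Fop d (φ v)) ∧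
      (∀ v, φ (KV v) = Kop q d (φ v)) ∧
      (∀ v, φ (KinvV v) = Kinvop q d (φ v)) :=
  irreducible_iso_Md_general q hq hroot d hd V hdim EV FV KV KinvV hKinvK hKE hKF hEF hirr heig
end

section
/- Let κ > 0, d', d'' positive integers with κ > 4(max(d',d'')−1), and m a nonnegative integer. The generalized beta integral B = ∫_{0<w_1<⋯<w_m<1} ∏_{r=1}^m w_r^{−(4/κ)(d'−1)} ∏_{r=1}^m (1−w_r)^{−(4/κ)(d''−1)} ∏_{r<s} (w_s−w_r)^{8/κ} dw_1⋯dw_m is finite (the integrand is integrable over the open simplex). In the special case m = 1, B equals Γ(1−(4/κ)(d'−1))·Γ(1−(4/κ)(d''−1))/Γ(2−(4/κ)(d'+d''−2)). -/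
open scoped BigOperators
open MeasureTheory

/-- The open simplex `{0 < w_1 < ⋯ < w_m < 1} ⊂ ℝ^m`. -/
def openSimplex (m : ℕ) : Set (Fin m → ℝ) :=
  {w | StrictMono w ∧ ∀ r, 0 < w r ∧ w r < 1}

/-- The integrand of the generalized beta integral `B_d^{d',d''}`. -/
noncomputable def betaIntegrand (κ : ℝ) (d' d'' : ℕ) (m : ℕ) (w : Fin m → ℝ) : ℝ :=
  (∏ r : Fin m, (w r) ^ (-(4 / κ) * ((d' : ℝ) - 1))) *
  (∏ r : Fin m, (1 - w r) ^ (-(4 / κ) * ((d'' : ℝ) - 1))) *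
  (∏ p ∈ Finset.univ.filter (fun p : Fin m × Fin m => p.1 < p.2),
      (w p.2 - w p.1) ^ (8 / κ))

lemma betaIntegrand_measurable (κ : ℝ) (d' d'' m : ℕ) :
    Measurable (betaIntegrand κ d' d'' m) := by
  have hpow : ∀ c : ℝ, Measurable (fun x : ℝ => x ^ c) := fun c => by measurability
  unfold betaIntegrand
  refine Measurable.mul (Measurable.mul ?_ ?_) ?_
  · exact Finset.measurable_prod _ fun r _ => (hpow _).comp (measurable_pi_apply r)
  · exact Finset.measurable_prod _ fun r _ =>
      (hpow _).comp (measurable_const.sub (measurable_pi_apply r))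
  · exact Finset.measurable_prod _ fun p _ =>
      (hpow _).comp ((measurable_pi_apply p.2).sub (measurable_pi_apply p.1))

lemma openSimplex_measurableSet (m : ℕ) : MeasurableSet (openSimplex m) := by
  have h : openSimplex m =
      (⋂ (i : Fin m), ⋂ (j : Fin m), ⋂ (_ : i < j), {w : Fin m → ℝ | w i < w j}) ∩
      ⋂ (r : Fin m), ({w : Fin m → ℝ | 0 < w r} ∩ {w : Fin m → ℝ | w r < 1}) := by
    ext w
    constructor
    · rintro ⟨h1, h2⟩
      refine ⟨Set.mem_iInter.2 fun i => Set.mem_iInter.2 fun j => Set.mem_iInter.2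
        fun hij => h1 hij, Set.mem_iInter.2 fun r => ⟨(h2 r).1, (h2 r).2⟩⟩
    · rintro ⟨h1, h2⟩
      refine ⟨fun i j hij => ?_, fun r => ?_⟩
      · exact Set.mem_iInter.1 (Set.mem_iInter.1 (Set.mem_iInter.1 h1 i) j) hij
      · exact Set.mem_iInter.1 h2 r
  rw [h]
  refine MeasurableSet.inter ?_ ?_
  · exact MeasurableSet.iInter fun i => MeasurableSet.iInter fun j =>
      MeasurableSet.iInter fun _ =>
        measurableSet_lt (measurable_pi_apply i) (measurable_pi_apply j)
  · exact MeasurableSet.iInter fun r =>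
      (measurableSet_lt measurable_const (measurable_pi_apply r)).inter
        (measurableSet_lt (measurable_pi_apply r) measurable_const)

lemma oneDim_integrable {a b : ℝ} (ha0 : 0 ≤ a) (ha1 : a < 1) (hb0 : 0 ≤ b) (hb1 : b < 1) :
    MeasureTheory.IntegrableOn (fun x : ℝ => x ^ (-a) * (1 - x) ^ (-b)) (Set.Ioo 0 1) := by
  have hpow : ∀ c : ℝ, Measurable (fun x : ℝ => x ^ c) := fun c => by measurability
  have hmeas : Measurable (fun x : ℝ => x ^ (-a) * (1 - x) ^ (-b)) :=
    (hpow _).mul ((hpow _).comp (measurable_const.sub measurable_id))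
  have half1 : MeasureTheory.IntegrableOn
      (fun x : ℝ => x ^ (-a) * (1 - x) ^ (-b)) (Set.Ioc 0 2⁻¹) := by
    have hi : IntervalIntegrable (fun x : ℝ => x ^ (-a)) volume 0 2⁻¹ :=
      intervalIntegral.intervalIntegrable_rpow' (by linarith)
    rw [intervalIntegrable_iff_integrableOn_Ioc_of_le (by norm_num)] at hi
    refine Integrable.mono' (hi.mul_const ((2:ℝ) ^ b))
      (hmeas.aestronglyMeasurable.restrict) ?_
    rw [ae_restrict_iff' measurableSet_Ioc]
    filter_upwards with x hx
    have hx0 : 0 < x := hx.1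
    have hx1 : (2:ℝ)⁻¹ ≤ 1 - x := by
      have := hx.2; norm_num at this ⊢; linarith
    have h1x : (0:ℝ) < 1 - x := lt_of_lt_of_le (by norm_num) hx1
    rw [Real.norm_eq_abs, abs_of_nonneg
      (mul_nonneg (Real.rpow_nonneg hx0.le _) (Real.rpow_nonneg h1x.le _))]
    have hle : (1 - x) ^ (-b) ≤ (2:ℝ) ^ b := by
      have h2 := Real.rpow_le_rpow_of_nonpos (by norm_num : (0:ℝ) < 2⁻¹) hx1
        (neg_nonpos.mpr hb0)
      calc (1 - x) ^ (-b) ≤ ((2:ℝ)⁻¹) ^ (-b) := h2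
        _ = (2:ℝ) ^ b := by
          rw [Real.inv_rpow (by norm_num), Real.rpow_neg (by norm_num), inv_inv]
    exact mul_le_mul_of_nonneg_left hle (Real.rpow_nonneg hx0.le _)
  have half2 : MeasureTheory.IntegrableOn
      (fun x : ℝ => x ^ (-a) * (1 - x) ^ (-b)) (Set.Ioc 2⁻¹ 1) := by
    have h0 : IntervalIntegrable (fun x : ℝ => x ^ (-b)) volume 0 2⁻¹ :=
      intervalIntegral.intervalIntegrable_rpow' (by linarith)
    have hi0 := h0.comp_sub_left 1
    simp only [sub_zero] at hi0
    have h2 : (1:ℝ) - 2⁻¹ = 2⁻¹ := by norm_num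
    rw [h2] at hi0
    have hi := hi0.symm
    rw [intervalIntegrable_iff_integrableOn_Ioc_of_le (by norm_num)] at hi
    refine Integrable.mono' (hi.const_mul ((2:ℝ) ^ a))
      (hmeas.aestronglyMeasurable.restrict) ?_
    rw [ae_restrict_iff' measurableSet_Ioc]
    filter_upwards with x hx
    have hx0 : (0:ℝ) < x := lt_of_lt_of_le (by norm_num) hx.1.le
    have h1x : (0:ℝ) ≤ 1 - x := by linarith [hx.2]
    rw [Real.norm_eq_abs, abs_of_nonneg
      (mul_nonneg (Real.rpow_nonneg hx0.le _) (Real.rpow_nonneg h1x _))]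
    have hle : x ^ (-a) ≤ (2:ℝ) ^ a := by
      have h2' := Real.rpow_le_rpow_of_nonpos (by norm_num : (0:ℝ) < 2⁻¹) hx.1.le
        (neg_nonpos.mpr ha0)
      calc x ^ (-a) ≤ ((2:ℝ)⁻¹) ^ (-a) := h2'
        _ = (2:ℝ) ^ a := by
          rw [Real.inv_rpow (by norm_num), Real.rpow_neg (by norm_num), inv_inv]
    calc x ^ (-a) * (1 - x) ^ (-b) ≤ (2:ℝ) ^ a * (1 - x) ^ (-b) :=
          mul_le_mul_of_nonneg_right hle (Real.rpow_nonneg h1x _)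
      _ = (2:ℝ) ^ a * (1 - x) ^ (-b) := rfl
  have hsub : Set.Ioo (0:ℝ) 1 ⊆ Set.Ioc 0 2⁻¹ ∪ Set.Ioc 2⁻¹ 1 := by
    intro x hx
    rcases le_or_gt x 2⁻¹ with h | h
    · exact Or.inl ⟨hx.1, h⟩
    · exact Or.inr ⟨h, hx.2.le⟩
  exact (half1.union half2).mono_set hsub

/-- For `κ > 4(max(d',d'')−1)`, the generalized beta integral converges (the integrand is
integrable over the open simplex), and in the case `m = 1` it equals the classical beta
integral `Γ(1−(4/κ)(d'−1))·Γ(1−(4/κ)(d''−1))/Γ(2−(4/κ)(d'+d''−2))`. -/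
theorem betaIntegral_convergence_and_value (κ : ℝ) (hκ0 : 0 < κ)
    (d' d'' : ℕ) (hd' : 1 ≤ d') (hd'' : 1 ≤ d'')
    (hκ : 4 * ((max d' d'' : ℝ) - 1) < κ) (m : ℕ) :
    IntegrableOn (betaIntegrand κ d' d'' m) (openSimplex m) volume ∧
      (m = 1 →
        ∫ w in openSimplex 1, betaIntegrand κ d' d'' 1 w ∂volume =
          Real.Gamma (1 - (4 / κ) * ((d' : ℝ) - 1)) *
            Real.Gamma (1 - (4 / κ) * ((d'' : ℝ) - 1)) /
            Real.Gamma (2 - (4 / κ) * ((d' : ℝ) + (d'' : ℝ) - 2))) := by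
  have hd'R : (1:ℝ) ≤ (d' : ℝ) := by exact_mod_cast hd'
  have hd''R : (1:ℝ) ≤ (d'' : ℝ) := by exact_mod_cast hd''
  have hmax' : (d' : ℝ) ≤ max (d' : ℝ) (d'' : ℝ) := le_max_left _ _
  have hmax'' : (d'' : ℝ) ≤ max (d' : ℝ) (d'' : ℝ) := le_max_right _ _
  have ha0 : 0 ≤ 4 / κ * ((d' : ℝ) - 1) := by
    apply mul_nonneg (by positivity); linarith
  have hb0 : 0 ≤ 4 / κ * ((d'' : ℝ) - 1) := by
    apply mul_nonneg (by positivity); linarith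
  have ha1 : 4 / κ * ((d' : ℝ) - 1) < 1 := by
    rw [div_mul_eq_mul_div, div_lt_one hκ0]; linarith
  have hb1 : 4 / κ * ((d'' : ℝ) - 1) < 1 := by
    rw [div_mul_eq_mul_div, div_lt_one hκ0]; linarith
  constructor
  · -- Integrability
    have hind := oneDim_integrable ha0 ha1 hb0 hb1
    simp only [← neg_mul] at hind
    have hG : Integrable (fun w : Fin m → ℝ =>
        ∏ r : Fin m, (Set.Ioo (0:ℝ) 1).indicator
          (fun x => x ^ (-(4 / κ) * ((d' : ℝ) - 1)) *
            (1 - x) ^ (-(4 / κ) * ((d'' : ℝ) - 1))) (w r)) :=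
      Integrable.fintype_prod (fun _ => hind.integrable_indicator measurableSet_Ioo)
    refine Integrable.mono' hG.integrableOn
      ((betaIntegrand_measurable κ d' d'' m).aestronglyMeasurable.restrict) ?_
    rw [ae_restrict_iff' (openSimplex_measurableSet m)]
    filter_upwards with w hw
    obtain ⟨hmono, hbd⟩ := hw
    have hw01 : ∀ r, w r ∈ Set.Ioo (0:ℝ) 1 := fun r => ⟨(hbd r).1, (hbd r).2⟩
    have hA0 : 0 ≤ ∏ r : Fin m, (w r) ^ (-(4 / κ) * ((d' : ℝ) - 1)) :=
      Finset.prod_nonneg fun r _ => Real.rpow_nonneg (hbd r).1.le _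
    have hB0 : 0 ≤ ∏ r : Fin m, (1 - w r) ^ (-(4 / κ) * ((d'' : ℝ) - 1)) :=
      Finset.prod_nonneg fun r _ => Real.rpow_nonneg (by linarith [(hbd r).2]) _
    have hP0 : 0 ≤ ∏ p ∈ Finset.univ.filter (fun p : Fin m × Fin m => p.1 < p.2),
        (w p.2 - w p.1) ^ (8 / κ) :=
      Finset.prod_nonneg fun p hp => Real.rpow_nonneg
        (sub_nonneg.mpr (hmono (Finset.mem_filter.mp hp).2).le) _
    have hP1 : (∏ p ∈ Finset.univ.filter (fun p : Fin m × Fin m => p.1 < p.2),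
        (w p.2 - w p.1) ^ (8 / κ)) ≤ 1 := by
      refine Finset.prod_le_one (fun p hp => Real.rpow_nonneg
        (sub_nonneg.mpr (hmono (Finset.mem_filter.mp hp).2).le) _) (fun p hp => ?_)
      refine Real.rpow_le_one (sub_nonneg.mpr (hmono (Finset.mem_filter.mp hp).2).le)
        ?_ (by positivity)
      have := (hbd p.1).1
      have := (hbd p.2).2
      linarith
    have hRHS : (∏ r : Fin m, (Set.Ioo (0:ℝ) 1).indicator
        (fun x => x ^ (-(4 / κ) * ((d' : ℝ) - 1)) *
          (1 - x) ^ (-(4 / κ) * ((d'' : ℝ) - 1))) (w r)) =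
        (∏ r : Fin m, (w r) ^ (-(4 / κ) * ((d' : ℝ) - 1))) *
        (∏ r : Fin m, (1 - w r) ^ (-(4 / κ) * ((d'' : ℝ) - 1))) := by
      rw [← Finset.prod_mul_distrib]
      exact Finset.prod_congr rfl fun r _ => Set.indicator_of_mem (hw01 r) _
    rw [hRHS, Real.norm_eq_abs, betaIntegrand,
      abs_of_nonneg (mul_nonneg (mul_nonneg hA0 hB0) hP0)]
    exact mul_le_of_le_one_right (mul_nonneg hA0 hB0) hP1
  · -- m = 1 evaluation
    intro _
    set s : ℝ := 1 - 4 / κ * ((d' : ℝ) - 1) with hs_def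
    set t : ℝ := 1 - 4 / κ * ((d'' : ℝ) - 1) with ht_def
    have hs : 0 < s := by rw [hs_def]; linarith
    have ht : 0 < t := by rw [ht_def]; linarith
    have key : ∫ w in openSimplex 1, betaIntegrand κ d' d'' 1 w =
        ∫ x in Set.Ioo (0:ℝ) 1, x ^ (s - 1) * (1 - x) ^ (t - 1) := by
      have hpre : openSimplex 1 =
          (MeasurableEquiv.funUnique (Fin 1) ℝ) ⁻¹' (Set.Ioo 0 1) := by
        ext w
        constructor
        · rintro ⟨_, h2⟩
          exact ⟨(h2 default).1, (h2 default).2⟩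
        · rintro ⟨h1, h2⟩
          refine ⟨Subsingleton.strictMono w, fun r => ?_⟩
          have : r = default := Subsingleton.elim _ _
          rw [this]; exact ⟨h1, h2⟩
      rw [hpre, ← (volume_preserving_funUnique (Fin 1) ℝ).setIntegral_preimage_emb
        (MeasurableEquiv.measurableEmbedding _)]
      refine setIntegral_congr_fun (measurableSet_preimage
        (MeasurableEquiv.funUnique (Fin 1) ℝ).measurable measurableSet_Ioo) ?_
      intro w _
      show betaIntegrand κ d' d'' 1 w = (w default) ^ (s - 1) * (1 - w default) ^ (t - 1)
      have hfilter : (Finset.univ.filter (fun p : Fin 1 × Fin 1 => p.1 < p.2)) = ∅ := by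
        decide
      rw [betaIntegrand, hfilter]
      simp only [Finset.prod_empty, mul_one, Fin.prod_univ_one]
      have h1 : s - 1 = -(4 / κ) * ((d' : ℝ) - 1) := by rw [hs_def]; ring
      have h2 : t - 1 = -(4 / κ) * ((d'' : ℝ) - 1) := by rw [ht_def]; ring
      rw [h1, h2]
      rfl
    have hbeta_real : Complex.betaIntegral (s : ℂ) (t : ℂ) =
        ((∫ x in (0:ℝ)..1, x ^ (s - 1) * (1 - x) ^ (t - 1) : ℝ) : ℂ) := by
      rw [Complex.betaIntegral, ← intervalIntegral.integral_ofReal]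
      refine intervalIntegral.integral_congr ?_
      intro x hx
      rw [Set.uIcc_of_le (by norm_num : (0:ℝ) ≤ 1)] at hx
      have hx0 : (0:ℝ) ≤ x := hx.1
      have hx1 : (0:ℝ) ≤ 1 - x := by linarith [hx.2]
      show (x : ℂ) ^ ((s : ℂ) - 1) * ((1 : ℂ) - (x : ℂ)) ^ ((t : ℂ) - 1) =
        ((x ^ (s - 1) * (1 - x) ^ (t - 1) : ℝ) : ℂ)
      rw [Complex.ofReal_mul, Complex.ofReal_cpow hx0, Complex.ofReal_cpow hx1]
      push_cast
      ring
    have hGst : Real.Gamma (s + t) ≠ 0 := (Real.Gamma_pos_of_pos (by linarith)).ne'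
    have hI : ∫ x in (0:ℝ)..1, x ^ (s - 1) * (1 - x) ^ (t - 1) =
        Real.Gamma s * Real.Gamma t / Real.Gamma (s + t) := by
      have h := Complex.Gamma_mul_Gamma_eq_betaIntegral
        (s := (s : ℂ)) (t := (t : ℂ)) (by simpa using hs) (by simpa using ht)
      rw [hbeta_real, Complex.Gamma_ofReal, Complex.Gamma_ofReal,
        ← Complex.ofReal_add, Complex.Gamma_ofReal, ← Complex.ofReal_mul,
        ← Complex.ofReal_mul] at h
      have h' := Complex.ofReal_inj.mp h
      field_simp
      linarith [h']
    have hst : s + t = 2 - 4 / κ * ((d' : ℝ) + (d'' : ℝ) - 2) := by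
      rw [hs_def, ht_def]; ring
    rw [key, ← hst, ← hI, intervalIntegral.integral_of_le (by norm_num : (0:ℝ) ≤ 1),
      MeasureTheory.integral_Ioc_eq_integral_Ioo]
end
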